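/- arXiv:2409.15198 — 2 statements merged into one kernel-verified Lean document; each statement's English description precedes it below -/
import Mathlib

section
/- Let f : [a, b] → ℝ be continuously differentiable with f(a) = f(b) = 0 (compact support in (a,b)), and let w : [a,b] → ℝ be C¹ with w > 0 and w'(t) ≥ c·w(t) for some c > 0 on [a,b]. Then ∫_a^b f(t)² w(t) dt ≤ (2/c) (∫_a^b f'(t)² w(t) dt)^{1/2} (∫_a^b f(t)² w(t) dt)^{1/2}, and consequently ∫_a^b f(t)² w(t) dt ≤ (4/c²) ∫_a^b f'(t)² w(t) dt. -/
/-!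
Since `w' ≥ c w` and the boundary terms vanish, integration by parts gives
`c ∫ f² w ≤ ∫ f² w' = -2 ∫ f f' w`, and the weighted Cauchy–Schwarz inequality bounds the right
side by `2 √(∫ f'² w) √(∫ f² w)`. Cancelling one factor `√(∫ f² w)` and squaring gives the
second estimate.
-/

open intervalIntegral MeasureTheory Set

theorem abs_integral_mul_mul_le_sqrt_mul_sqrt {α : Type*} [MeasurableSpace α] {μ : Measure α}
    {g h w : α → ℝ} (hw : 0 ≤ᵐ[μ] w) (hg : Integrable (fun x => g x ^ 2 * w x) μ)
    (hh : Integrable (fun x => h x ^ 2 * w x) μ) (hgh : Integrable (fun x => g x * h x * w x) μ) :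
    |∫ x, g x * h x * w x ∂μ| ≤ √(∫ x, g x ^ 2 * w x ∂μ) * √(∫ x, h x ^ 2 * w x ∂μ) := by
  set A := ∫ x, g x ^ 2 * w x ∂μ
  set B := ∫ x, g x * h x * w x ∂μ
  set C := ∫ x, h x ^ 2 * w x ∂μ
  have hA : 0 ≤ A := integral_nonneg_of_ae (hw.mono fun x hx => mul_nonneg (sq_nonneg _) hx)
  have quadratic_nonneg : ∀ s : ℝ, 0 ≤ C * (s * s) + 2 * B * s + A := by
    intro s
    have expand : ∫ x, (g x + s * h x) ^ 2 * w x ∂μ = C * (s * s) + 2 * B * s + A := by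
      have hsplit : (fun x => (g x + s * h x) ^ 2 * w x) = fun x =>
          (s * s) * (h x ^ 2 * w x) + (2 * s) * (g x * h x * w x) + g x ^ 2 * w x := by
        ext x; ring
      rw [hsplit, integral_add (f := fun x => s * s * (h x ^ 2 * w x) + 2 * s * (g x * h x * w x))
        ((hh.const_mul _).add (hgh.const_mul _)) hg,
        integral_add (hh.const_mul _) (hgh.const_mul _), MeasureTheory.integral_const_mul,
        MeasureTheory.integral_const_mul]
      ring
    exact expand ▸ integral_nonneg_of_ae (hw.mono fun x hx => mul_nonneg (sq_nonneg _) hx)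
  have hdiscrim := discrim_le_zero quadratic_nonneg
  rw [discrim] at hdiscrim
  rw [← Real.sqrt_mul hA]
  exact Real.abs_le_sqrt (by nlinarith)

theorem abs_intervalIntegral_mul_mul_le_sqrt_mul_sqrt {a b : ℝ} (hab : a ≤ b) {g h w : ℝ → ℝ}
    (hw : ∀ t ∈ Icc a b, 0 ≤ w t)
    (hg : IntervalIntegrable (fun t => g t ^ 2 * w t) volume a b)
    (hh : IntervalIntegrable (fun t => h t ^ 2 * w t) volume a b)
    (hgh : IntervalIntegrable (fun t => g t * h t * w t) volume a b) :
    |∫ t in a..b, g t * h t * w t| ≤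
      √(∫ t in a..b, g t ^ 2 * w t) * √(∫ t in a..b, h t ^ 2 * w t) := by
  simp only [integral_of_le hab]
  exact abs_integral_mul_mul_le_sqrt_mul_sqrt
    (ae_restrict_of_forall_mem measurableSet_Ioc fun t ht => hw t (Ioc_subset_Icc_self ht))
    hg.1 hh.1 hgh.1

theorem integral_sq_mul_deriv_eq_neg_two_mul {a b : ℝ} {f f' w w' : ℝ → ℝ}
    (hf : ∀ t ∈ uIcc a b, HasDerivAt f (f' t) t) (hw : ∀ t ∈ uIcc a b, HasDerivAt w (w' t) t)
    (hff' : IntervalIntegrable (fun t => f t * f' t) volume a b)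
    (hw' : IntervalIntegrable w' volume a b) (hfa : f a = 0) (hfb : f b = 0) :
    ∫ t in a..b, f t ^ 2 * w' t = -(2 * ∫ t in a..b, f t * f' t * w t) := by
  have hf2 : ∀ t ∈ uIcc a b, HasDerivAt (fun t => f t ^ 2) (2 * (f t * f' t)) t := fun t ht =>
    ((hf t ht).pow 2).congr_deriv (by ring)
  rw [integral_mul_deriv_eq_deriv_mul hf2 hw (hff'.const_mul 2) hw', hfa, hfb,
    ← intervalIntegral.integral_const_mul]
  simp only [mul_assoc]; ring

theorem le_four_div_sq_mul_of_mul_le_two_mul_sqrt_mul_sqrt {c I J : ℝ} (hc : 0 < c) (hI : 0 ≤ I)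
    (hJ : 0 ≤ J) (h : c * I ≤ 2 * √J * √I) : I ≤ 4 / c ^ 2 * J := by
  obtain hI0 | hIpos := hI.eq_or_lt
  · rw [← hI0]; positivity
  have hcancel : c * √I * √I ≤ 2 * √J * √I := by rwa [mul_assoc, Real.mul_self_sqrt hI]
  have hroot : c * √I ≤ 2 * √J := le_of_mul_le_mul_right hcancel (Real.sqrt_pos.2 hIpos)
  rw [div_mul_eq_mul_div, le_div_iff₀ (by positivity)]
  calc I * c ^ 2 = (c * √I) ^ 2 := by rw [mul_pow, Real.sq_sqrt hI, mul_comm]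
    _ ≤ (2 * √J) ^ 2 := pow_le_pow_left₀ (by positivity) hroot 2
    _ = 4 * J := by rw [mul_pow, Real.sq_sqrt hJ]; norm_num

theorem mul_integral_sq_mul_le_two_mul_sqrt_mul_sqrt {a b c : ℝ} (hab : a ≤ b)
    {f f' w w' : ℝ → ℝ} (hf : ∀ t ∈ Icc a b, HasDerivAt f (f' t) t)
    (hw : ∀ t ∈ Icc a b, HasDerivAt w (w' t) t) (hf'c : ContinuousOn f' (Icc a b))
    (hw'c : ContinuousOn w' (Icc a b)) (hfa : f a = 0) (hfb : f b = 0)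
    (hw0 : ∀ t ∈ Icc a b, 0 ≤ w t) (hww' : ∀ t ∈ Icc a b, c * w t ≤ w' t) :
    c * ∫ t in a..b, f t ^ 2 * w t ≤
      2 * √(∫ t in a..b, f' t ^ 2 * w t) * √(∫ t in a..b, f t ^ 2 * w t) := by
  have hIcc : uIcc a b = Icc a b := uIcc_of_le hab
  have hfc : ContinuousOn f (Icc a b) := fun t ht => (hf t ht).continuousAt.continuousWithinAt
  have hwc : ContinuousOn w (Icc a b) := fun t ht => (hw t ht).continuousAt.continuousWithinAt
  have integrable {F : ℝ → ℝ} (hF : ContinuousOn F (Icc a b)) : IntervalIntegrable F volume a b :=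
    (hIcc ▸ hF).intervalIntegrable
  calc c * ∫ t in a..b, f t ^ 2 * w t = ∫ t in a..b, c * (f t ^ 2 * w t) :=
        (intervalIntegral.integral_const_mul _ _).symm
    _ ≤ ∫ t in a..b, f t ^ 2 * w' t :=
      integral_mono_on hab (integrable (continuousOn_const.mul ((hfc.pow 2).mul hwc)))
        (integrable ((hfc.pow 2).mul hw'c)) fun t ht => by
          linarith [mul_le_mul_of_nonneg_left (hww' t ht) (sq_nonneg (f t))]
    _ = -(2 * ∫ t in a..b, f' t * f t * w t) := by
      rw [integral_sq_mul_deriv_eq_neg_two_mul (hIcc ▸ hf) (hIcc ▸ hw) (integrable (hfc.mul hf'c))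
        (integrable hw'c) hfa hfb]
      simp only [mul_comm (f _) (f' _)]
    _ ≤ 2 * |∫ t in a..b, f' t * f t * w t| := by
      linarith [neg_abs_le (∫ t in a..b, f' t * f t * w t)]
    _ ≤ _ := by
      rw [mul_assoc]
      exact mul_le_mul_of_nonneg_left (abs_intervalIntegral_mul_mul_le_sqrt_mul_sqrt hab hw0
        (integrable ((hf'c.pow 2).mul hwc)) (integrable ((hfc.pow 2).mul hwc))
        (integrable ((hf'c.mul hfc).mul hwc))) two_pos.le

/-- One-dimensional Poincaré/absorption estimate: for f C¹ with f(a) = f(b) = 0 and a C¹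
weight w > 0 with w' ≥ c·w (c > 0) on [a,b]:
∫ f²w ≤ (2/c)(∫ f'²w)^{1/2}(∫ f²w)^{1/2} and ∫ f²w ≤ (4/c²)∫ f'²w. -/
theorem stmt9 (a b c : ℝ) (hab : a < b) (hc : 0 < c)
    (f f' w w' : ℝ → ℝ)
    (hf : ∀ t ∈ Set.Icc a b, HasDerivAt f (f' t) t)
    (hw : ∀ t ∈ Set.Icc a b, HasDerivAt w (w' t) t)
    (hf'c : ContinuousOn f' (Set.Icc a b)) (hw'c : ContinuousOn w' (Set.Icc a b))
    (hfa : f a = 0) (hfb : f b = 0)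
    (hwpos : ∀ t ∈ Set.Icc a b, 0 < w t)
    (hww' : ∀ t ∈ Set.Icc a b, c * w t ≤ w' t) :
    (∫ t in a..b, (f t) ^ 2 * w t) ≤
        (2 / c) * Real.sqrt (∫ t in a..b, (f' t) ^ 2 * w t) *
          Real.sqrt (∫ t in a..b, (f t) ^ 2 * w t) ∧
    (∫ t in a..b, (f t) ^ 2 * w t) ≤ (4 / c ^ 2) * ∫ t in a..b, (f' t) ^ 2 * w t := by
  have hw0 : ∀ t ∈ Icc a b, 0 ≤ w t := fun t ht => (hwpos t ht).le
  have hI : 0 ≤ ∫ t in a..b, f t ^ 2 * w t :=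
    integral_nonneg hab.le fun t ht => mul_nonneg (sq_nonneg _) (hw0 t ht)
  have hJ : 0 ≤ ∫ t in a..b, f' t ^ 2 * w t :=
    integral_nonneg hab.le fun t ht => mul_nonneg (sq_nonneg _) (hw0 t ht)
  have key :=
    mul_integral_sq_mul_le_two_mul_sqrt_mul_sqrt hab.le hf hw hf'c hw'c hfa hfb hw0 hww'
  refine ⟨?_, le_four_div_sq_mul_of_mul_le_two_mul_sqrt_mul_sqrt hc hI hJ key⟩
  rw [div_mul_eq_mul_div, div_mul_eq_mul_div, le_div_iff₀ hc]
  linarith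
end

section
/- Let f ∈ C¹_c((-∞, T₀)) and τ ≥ 1. Then τ² ∫ f(t)² e^{-t} e^{-2τφ(t)} dt ≤ C ∫ f'(t)² e^{-t} e^{-2τφ(t)} dt, where φ(t) = t + ln(t²) and C is an absolute constant (using φ'(t) ≥ 1/2 for t ≤ T₀ with |T₀| large). -/
/-!
For the weight `w = e^{-t} e^{-2τφ(t)}` one has `-w' = (1 + 2τφ') w`, and `φ' = 1 + 2/t ≥ 1/2`
for `t ≤ -4`, so `-w' ≥ τ w` there. Integrating `(f² w)'` over the line gives
`∫ f² (-w') = 2 ∫ f f' w`, which AM-GM bounds by `(τ/2) ∫ f² w + (2/τ) ∫ f'² w`. Absorbing the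
first term into `τ ∫ f² w ≤ ∫ f² (-w')` leaves `τ² ∫ f² w ≤ 4 ∫ f'² w`.
-/

open MeasureTheory Set Filter Topology

theorem tsupport_pow {X M₀ : Type*} [TopologicalSpace X] [MonoidWithZero M₀] [IsReduced M₀]
    (f : X → M₀) {n : ℕ} (hn : n ≠ 0) : tsupport (fun x => f x ^ n) = tsupport f := by
  rw [tsupport, Function.support_pow f hn]; rfl

theorem HasCompactSupport.pow {X M₀ : Type*} [TopologicalSpace X] [MonoidWithZero M₀]
    [IsReduced M₀] {f : X → M₀} (hcs : HasCompactSupport f) {n : ℕ} (hn : n ≠ 0) :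
    HasCompactSupport (fun x => f x ^ n) := by
  rwa [HasCompactSupport, tsupport_pow f hn]

theorem two_mul_mul_mul_le {a b w c : ℝ} (hw : 0 ≤ w) (hc : 0 < c) :
    2 * (a * b * w) ≤ c / 2 * (a ^ 2 * w) + 2 / c * (b ^ 2 * w) := by
  have hsq : c / 2 * (a ^ 2 * w) + 2 / c * (b ^ 2 * w) - 2 * (a * b * w) =
      w / (2 * c) * (c * a - 2 * b) ^ 2 := by
    field_simp
    ring
  nlinarith [show 0 ≤ w / (2 * c) * (c * a - 2 * b) ^ 2 by positivity]

theorem integrable_mul_of_tsupport_subset {X : Type*} [TopologicalSpace X] [MeasurableSpace X]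
    [OpensMeasurableSpace X] {μ : Measure X} [IsFiniteMeasureOnCompacts μ] {U : Set X}
    {g h : X → ℝ} (hg : Continuous g) (hcs : HasCompactSupport g) (hU : IsOpen U)
    (hsupp : tsupport g ⊆ U) (hh : ContinuousOn h U) :
    Integrable (fun x => g x * h x) μ :=
  ((hg.continuousOn.mul hh).continuous_of_tsupport_subset hU
    (tsupport_mul_subset_left.trans hsupp)).integrable_of_hasCompactSupport hcs.mul_right

section WeightedAbsorption

variable {f w w' : ℝ → ℝ} {U : Set ℝ}

theorem hasDerivAt_sq_mul_of_tsupport_subset (hf : Differentiable ℝ f) (hsupp : tsupport f ⊆ U)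
    (hw : ∀ t ∈ U, HasDerivAt w (w' t) t) (t : ℝ) :
    HasDerivAt (fun s => f s ^ 2 * w s) (2 * (f t * deriv f t * w t) + f t ^ 2 * w' t) t := by
  by_cases ht : t ∈ tsupport f
  · refine (((hf t).hasDerivAt.pow 2).mul (hw t (hsupp ht))).congr_deriv ?_
    simp only [Pi.pow_apply]
    ring
  · have hf0 : f =ᶠ[𝓝 t] 0 := notMem_tsupport_iff_eventuallyEq.1 ht
    have hg0 : (fun s => f s ^ 2 * w s) =ᶠ[𝓝 t] fun _ => 0 := hf0.mono fun s hs => by simp [hs]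
    rw [image_eq_zero_of_notMem_tsupport ht, hf0.deriv_eq]
    simpa using (hasDerivAt_const t (0 : ℝ)).congr_of_eventuallyEq hg0

variable (hU : IsOpen U) (hf : ContDiff ℝ 1 f) (hcs : HasCompactSupport f)
  (hsupp : tsupport f ⊆ U) (hw : ∀ t ∈ U, HasDerivAt w (w' t) t) (hw' : ContinuousOn w' U)
include hU hf hcs hsupp hw hw'

theorem integral_sq_mul_neg_deriv_eq :
    ∫ t, f t ^ 2 * -w' t = 2 * ∫ t, f t * deriv f t * w t := by
  obtain ⟨hdiff, hderiv⟩ := contDiff_one_iff_deriv.1 hf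
  have hwc : ContinuousOn w U := fun t ht => (hw t ht).continuousAt.continuousWithinAt
  have hffw : Integrable (fun t => f t * deriv f t * w t) :=
    integrable_mul_of_tsupport_subset (hdiff.continuous.mul hderiv) hcs.mul_right hU
      (tsupport_mul_subset_left.trans hsupp) hwc
  have hf2w' : Integrable (fun t => f t ^ 2 * w' t) :=
    integrable_mul_of_tsupport_subset (hdiff.continuous.pow 2) (hcs.pow two_ne_zero) hU
      (tsupport_pow f two_ne_zero ▸ hsupp) hw'
  have hf2w : HasCompactSupport (fun t => f t ^ 2 * w t) := (hcs.pow two_ne_zero).mul_right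
  have hzero : ∫ t, (2 * (f t * deriv f t * w t) + f t ^ 2 * w' t) = 0 := by
    rw [integral_of_hasDerivAt_of_tendsto (hasDerivAt_sq_mul_of_tsupport_subset hdiff hsupp hw)
      ((hffw.const_mul 2).add hf2w') (hf2w.is_zero_at_infty.mono_left atBot_le_cocompact)
      (hf2w.is_zero_at_infty.mono_left atTop_le_cocompact), sub_self]
  rw [integral_add (hffw.const_mul 2) hf2w', integral_const_mul] at hzero
  simp only [mul_neg, integral_neg]
  linarith

theorem sq_mul_integral_sq_mul_le (hw0 : ∀ t ∈ U, 0 ≤ w t) {c : ℝ} (hc : 0 < c)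
    (hdecay : ∀ t ∈ U, c * w t ≤ -w' t) :
    c ^ 2 * ∫ t, f t ^ 2 * w t ≤ 4 * ∫ t, deriv f t ^ 2 * w t := by
  obtain ⟨hdiff, hderiv⟩ := contDiff_one_iff_deriv.1 hf
  have hwc : ContinuousOn w U := fun t ht => (hw t ht).continuousAt.continuousWithinAt
  have hsupp2 : tsupport (fun t => f t ^ 2) ⊆ U := tsupport_pow f two_ne_zero ▸ hsupp
  have hf2w : Integrable (fun t => f t ^ 2 * w t) :=
    integrable_mul_of_tsupport_subset (hdiff.continuous.pow 2) (hcs.pow two_ne_zero) hU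
      hsupp2 hwc
  have hf'2w : Integrable (fun t => deriv f t ^ 2 * w t) :=
    integrable_mul_of_tsupport_subset (hderiv.pow 2) (hcs.deriv.pow two_ne_zero) hU
      (tsupport_pow (deriv f) two_ne_zero ▸ tsupport_deriv_subset.trans hsupp) hwc
  have hff'w : Integrable (fun t => f t * deriv f t * w t) :=
    integrable_mul_of_tsupport_subset (hdiff.continuous.mul hderiv) hcs.mul_right hU
      (tsupport_mul_subset_left.trans hsupp) hwc
  have hf2w' : Integrable (fun t => f t ^ 2 * -w' t) :=
    integrable_mul_of_tsupport_subset (hdiff.continuous.pow 2) (hcs.pow two_ne_zero) hU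
      hsupp2 hw'.neg
  have hvanish : ∀ t ∉ tsupport f, f t = 0 ∧ deriv f t = 0 := fun t ht =>
    ⟨image_eq_zero_of_notMem_tsupport ht,
      image_eq_zero_of_notMem_tsupport fun h => ht (tsupport_deriv_subset h)⟩
  have hlower : c * ∫ t, f t ^ 2 * w t ≤ ∫ t, f t ^ 2 * -w' t := by
    rw [← integral_const_mul]
    refine integral_mono (hf2w.const_mul c) hf2w' fun t => ?_
    by_cases ht : t ∈ tsupport f
    · nlinarith [hdecay t (hsupp ht), sq_nonneg (f t)]
    · simp [(hvanish t ht).1]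
  have hupper : 2 * ∫ t, f t * deriv f t * w t ≤
      c / 2 * (∫ t, f t ^ 2 * w t) + 2 / c * ∫ t, deriv f t ^ 2 * w t := by
    rw [← integral_const_mul, ← integral_const_mul, ← integral_const_mul,
      ← integral_add (hf2w.const_mul _) (hf'2w.const_mul _)]
    refine integral_mono (hff'w.const_mul 2) ((hf2w.const_mul _).add (hf'2w.const_mul _))
      fun t => ?_
    by_cases ht : t ∈ tsupport f
    · exact two_mul_mul_mul_le (hw0 t (hsupp ht)) hc
    · simp [hvanish t ht]
  have habsorb := hlower.trans
    ((integral_sq_mul_neg_deriv_eq hU hf hcs hsupp hw hw').le.trans hupper)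
  calc c ^ 2 * ∫ t, f t ^ 2 * w t = 2 * c * (c / 2 * ∫ t, f t ^ 2 * w t) := by ring
    _ ≤ 2 * c * (2 / c * ∫ t, deriv f t ^ 2 * w t) :=
      mul_le_mul_of_nonneg_left (by linarith) (by positivity)
    _ = 4 * ∫ t, deriv f t ^ 2 * w t := by field_simp; ring

end WeightedAbsorption

noncomputable def carlemanWeight (τ t : ℝ) : ℝ :=
  Real.exp (-t) * Real.exp (-2 * τ * (t + Real.log (t ^ 2)))

theorem carlemanWeight_pos (τ t : ℝ) : 0 < carlemanWeight τ t := by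
  unfold carlemanWeight
  positivity

theorem hasDerivAt_carlemanWeight (τ : ℝ) {t : ℝ} (ht : t ≠ 0) :
    HasDerivAt (carlemanWeight τ) (-(1 + 2 * τ * (1 + 2 / t)) * carlemanWeight τ t) t := by
  have hlog : HasDerivAt (fun s => Real.log (s ^ 2)) (2 / t) t := by
    refine ((hasDerivAt_pow 2 t).log (pow_ne_zero 2 ht)).congr_deriv ?_
    field_simp
    ring
  have hphase := ((hasDerivAt_id t).add hlog).const_mul (-2 * τ)
  refine ((hasDerivAt_neg t).exp.mul hphase.exp).congr_deriv ?_
  simp only [carlemanWeight, Pi.add_apply, id_eq]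
  ring

theorem mul_carlemanWeight_le {τ t : ℝ} (hτ : 0 ≤ τ) (ht : t < -4) :
    τ * carlemanWeight τ t ≤ (1 + 2 * τ * (1 + 2 / t)) * carlemanWeight τ t := by
  have hphase_deriv : 1 / 2 ≤ 1 + 2 / t := by
    have : -1 / 2 ≤ 2 / t := by rw [le_div_iff_of_neg (by linarith)]; linarith
    linarith
  exact mul_le_mul_of_nonneg_right (by nlinarith) (carlemanWeight_pos τ t).le

/-- Quantitative absorption with the weight e^{-t}e^{-2τφ(t)}, φ(t) = t + ln(t²):
there are an absolute constant C > 0 and T₀ < 0 such that for every C¹ function f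
compactly supported in (-∞, T₀) and every τ ≥ 1,
τ² ∫ f² e^{-t} e^{-2τφ} ≤ C ∫ (f')² e^{-t} e^{-2τφ}. -/
theorem stmt10 :
    ∃ C > (0 : ℝ), ∃ T₀ < (0 : ℝ), ∀ (f f' : ℝ → ℝ) (τ : ℝ), 1 ≤ τ →
      (∀ t, HasDerivAt f (f' t) t) → Continuous f' → HasCompactSupport f →
      tsupport f ⊆ Set.Iio T₀ →
      τ ^ 2 * ∫ t : ℝ, (f t) ^ 2 *
          (Real.exp (-t) * Real.exp (-2 * τ * (t + Real.log (t ^ 2)))) ≤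
        C * ∫ t : ℝ, (f' t) ^ 2 *
          (Real.exp (-t) * Real.exp (-2 * τ * (t + Real.log (t ^ 2)))) := by
  refine ⟨4, by norm_num, -4, by norm_num, fun f f' τ hτ hf hf' hcs hsupp => ?_⟩
  obtain rfl : f' = deriv f := funext fun t => (hf t).deriv.symm
  have hC1 : ContDiff ℝ 1 f := contDiff_one_iff_deriv.2 ⟨fun t => (hf t).differentiableAt, hf'⟩
  have hne : ∀ t ∈ Iio (-4 : ℝ), t ≠ 0 := fun t ht => ((mem_Iio.1 ht).trans (by norm_num)).ne
  have hw' : ContinuousOn (fun t => -(1 + 2 * τ * (1 + 2 / t)) * carlemanWeight τ t) (Iio (-4)) :=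
    ((continuousOn_const.add (continuousOn_const.mul (continuousOn_const.add
      (continuousOn_const.div continuousOn_id hne)))).neg).mul
      fun t ht => (hasDerivAt_carlemanWeight τ (hne t ht)).continuousAt.continuousWithinAt
  exact sq_mul_integral_sq_mul_le isOpen_Iio hC1 hcs hsupp
    (fun t ht => hasDerivAt_carlemanWeight τ (hne t ht)) hw'
    (fun t _ => (carlemanWeight_pos τ t).le) (by linarith)
    fun t ht => by rw [neg_mul, neg_neg]; exact mul_carlemanWeight_le (by linarith) ht
end
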